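/- Leave-one-out shortcut for a linear smoother produced by ridge regression: let X ∈ ℝ^{n×p} with rows xᵢᵀ, y ∈ ℝⁿ, λ > 0, L = X(XᵀX + nλI_p)⁻¹Xᵀ, and let β̂₋ᵢ be the ridge estimator fit on the data with the i-th observation removed (i.e., β̂₋ᵢ = (X₋ᵢᵀX₋ᵢ + nλI_p)⁻¹X₋ᵢᵀy₋ᵢ). If L_{ii} ≠ 1, then yᵢ − xᵢᵀβ̂₋ᵢ = (yᵢ − xᵢᵀβ̂)/(1 − L_{ii}), where β̂ = (XᵀX + nλI_p)⁻¹Xᵀy. -/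
import Mathlib


open Matrix

/-- Leave-one-out shortcut for ridge regression. -/
theorem loo_shortcut {n p : ℕ} (X : Matrix (Fin (n + 1)) (Fin p) ℝ)
    (y : Fin (n + 1) → ℝ) (lam : ℝ) (hlam : 0 < lam) (i : Fin (n + 1))
    (L : Matrix (Fin (n + 1)) (Fin (n + 1)) ℝ)
    (hL : L = X * (Xᵀ * X + (((n : ℝ) + 1) * lam) • (1 : Matrix (Fin p) (Fin p) ℝ))⁻¹ * Xᵀ)
    (βhat : Fin p → ℝ)
    (hβ : βhat = (Xᵀ * X + (((n : ℝ) + 1) * lam) • (1 : Matrix (Fin p) (Fin p) ℝ))⁻¹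
        *ᵥ (Xᵀ *ᵥ y))
    (Xmi : Matrix (Fin n) (Fin p) ℝ) (hX : Xmi = X.submatrix i.succAbove id)
    (ymi : Fin n → ℝ) (hy : ymi = y ∘ i.succAbove)
    (βloo : Fin p → ℝ)
    (hβloo : βloo = (Xmiᵀ * Xmi + (((n : ℝ) + 1) * lam) • (1 : Matrix (Fin p) (Fin p) ℝ))⁻¹
        *ᵥ (Xmiᵀ *ᵥ ymi))
    (hLii : L i i ≠ 1) :
    y i - X i ⬝ᵥ βloo = (y i - X i ⬝ᵥ βhat) / (1 - L i i) := by
  have hcpos : (0:ℝ) < ((n : ℝ) + 1) * lam := by positivity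
  set c : ℝ := ((n : ℝ) + 1) * lam with hc
  set A := Xᵀ * X + c • (1 : Matrix (Fin p) (Fin p) ℝ) with hA
  set Am := Xmiᵀ * Xmi + c • (1 : Matrix (Fin p) (Fin p) ℝ) with hAm
  -- positive definiteness
  have hone : (c • (1 : Matrix (Fin p) (Fin p) ℝ)).PosDef := by
    rw [Matrix.smul_one_eq_diagonal]
    exact Matrix.posDef_diagonal_iff.mpr fun _ => hcpos
  have hApd : A.PosDef := by
    have h := Matrix.posSemidef_conjTranspose_mul_self X
    rw [Matrix.conjTranspose_eq_transpose_of_trivial] at h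
    exact Matrix.PosDef.posSemidef_add h hone
  have hAmpd : Am.PosDef := by
    have h := Matrix.posSemidef_conjTranspose_mul_self Xmi
    rw [Matrix.conjTranspose_eq_transpose_of_trivial] at h
    exact Matrix.PosDef.posSemidef_add h hone
  have hAdet : IsUnit A.det := hApd.det_pos.ne'.isUnit
  have hAmdet : IsUnit Am.det := hAmpd.det_pos.ne'.isUnit
  -- normal equations
  have hAβ : A *ᵥ βhat = Xᵀ *ᵥ y := by
    rw [hβ, Matrix.mulVec_mulVec, Matrix.mul_nonsing_inv _ hAdet, Matrix.one_mulVec]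
  have hXty : Xmiᵀ *ᵥ ymi = Xᵀ *ᵥ y - y i • X i := by
    ext j
    simp only [hX, hy, Matrix.mulVec, dotProduct, Matrix.transpose_apply,
      Matrix.submatrix_apply, id, Function.comp_apply, Pi.sub_apply, Pi.smul_apply,
      smul_eq_mul]
    rw [Fin.sum_univ_succAbove (fun m => X m j * y m) i]
    ring
  have hAmβ : Am *ᵥ βloo = Xᵀ *ᵥ y - y i • X i := by
    rw [hβloo, Matrix.mulVec_mulVec, Matrix.mul_nonsing_inv _ hAmdet, Matrix.one_mulVec, hXty]
  -- rank-one relation between A and Am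
  have hA_eq : A = Am + Matrix.vecMulVec (X i) (X i) := by
    rw [hA, hAm]
    have hXtX : Xᵀ * X = Xmiᵀ * Xmi + Matrix.vecMulVec (X i) (X i) := by
      ext j k
      simp only [hX, Matrix.add_apply, Matrix.mul_apply, Matrix.transpose_apply,
        Matrix.submatrix_apply, id, Matrix.vecMulVec_apply]
      rw [Fin.sum_univ_succAbove (fun m => X m j * X m k) i]
      ring
    rw [hXtX]; abel
  have hvm : ∀ w : Fin p → ℝ,
      Matrix.vecMulVec (X i) (X i) *ᵥ w = (X i ⬝ᵥ w) • X i := by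
    intro w
    ext j
    simp only [Matrix.mulVec, dotProduct, Matrix.vecMulVec_apply, Pi.smul_apply,
      smul_eq_mul, Finset.sum_mul]
    exact Finset.sum_congr rfl fun k _ => by ring
  -- key identity
  have hkey : βloo - βhat = (X i ⬝ᵥ βloo - y i) • (A⁻¹ *ᵥ X i) := by
    have e1 : A *ᵥ βloo = (Xᵀ *ᵥ y - y i • X i) + (X i ⬝ᵥ βloo) • X i := by
      rw [hA_eq, Matrix.add_mulVec, hAmβ, hvm]
    have h1 : A *ᵥ (βloo - βhat) = (X i ⬝ᵥ βloo - y i) • X i := by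
      rw [Matrix.mulVec_sub, e1, hAβ]
      module
    calc βloo - βhat = A⁻¹ *ᵥ (A *ᵥ (βloo - βhat)) := by
          rw [Matrix.mulVec_mulVec, Matrix.nonsing_inv_mul _ hAdet, Matrix.one_mulVec]
      _ = (X i ⬝ᵥ βloo - y i) • (A⁻¹ *ᵥ X i) := by
          rw [h1, Matrix.mulVec_smul]
  have hLeq : L i i = X i ⬝ᵥ (A⁻¹ *ᵥ X i) := by
    rw [hL]
    simp only [Matrix.mul_apply, Matrix.mulVec, dotProduct, Matrix.transpose_apply,
      Finset.sum_mul, Finset.mul_sum]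
    rw [Finset.sum_comm]
    exact Finset.sum_congr rfl fun j _ => Finset.sum_congr rfl fun k _ => by ring
  have hdot : X i ⬝ᵥ βloo - X i ⬝ᵥ βhat = (X i ⬝ᵥ βloo - y i) * L i i := by
    have h2 := congrArg (fun v => X i ⬝ᵥ v) hkey
    simp only [dotProduct_sub, dotProduct_smul, smul_eq_mul] at h2
    rw [h2, hLeq]
  have hne : 1 - L i i ≠ 0 := sub_ne_zero.mpr (Ne.symm hLii)
  field_simp
  linear_combination -hdot
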